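/- The infinite sum of 3^i/(i * binom(2i, i)) for i from 1 to infinity equals 2π/√3. -/

import Mathlib

/-!
By the Beta integral, `1 / ((n + 1) * C(2n + 2, n + 1)) = ∫₀¹ tⁿ (1 - t)ⁿ⁺¹ dt`, so the `n`-th term
of the series is `∫₀¹ 3 (1 - t) (3t(1 - t))ⁿ dt`. Since `3t(1 - t) ≤ 3/4` on `[0, 1]`, the geometric
series may be summed under the integral, leaving the elementary integral
`∫₀¹ 3 (1 - t) / (3t² - 3t + 1) dt = 2π/√3`.
-/

open Real Set Filter intervalIntegral
open scoped Nat

theorem integral_pow_mul_one_sub_pow (m n : ℕ) :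
    ∫ x in (0:ℝ)..1, x ^ m * (1 - x) ^ n = (m ! : ℝ) * n ! / (m + n + 1)! := by
  have hβ : Complex.betaIntegral (m + 1) (n + 1)
      = ((∫ x in (0:ℝ)..1, x ^ m * (1 - x) ^ n : ℝ) : ℂ) := by
    rw [Complex.betaIntegral, ← integral_ofReal]
    refine integral_congr fun x _ => ?_
    simp [← Complex.cpow_natCast]
  have hΓ := Complex.betaIntegral_eq_Gamma_mul_div (m + 1) (n + 1)
    (by simp; positivity) (by simp; positivity)
  rw [hβ, show (m + 1 : ℂ) + (n + 1) = (m + n + 1 : ℕ) + 1 by push_cast; ring,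
    Complex.Gamma_nat_eq_factorial, Complex.Gamma_nat_eq_factorial,
    Complex.Gamma_nat_eq_factorial] at hΓ
  apply Complex.ofReal_injective
  rw [hΓ]
  push_cast
  rfl

theorem inv_succ_mul_choose_eq_integral (n : ℕ) :
    (((n : ℝ) + 1) * (2 * (n + 1)).choose (n + 1))⁻¹
      = ∫ t in (0:ℝ)..1, t ^ n * (1 - t) ^ (n + 1) := by
  have h := Nat.add_choose_mul_factorial_mul_factorial (n + 1) (n + 1)
  rw [integral_pow_mul_one_sub_pow, show n + (n + 1) + 1 = (n + 1) + (n + 1) by ring, ← h,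
    two_mul, Nat.factorial_succ n]
  push_cast
  field_simp

lemma mul_one_sub_le_quarter (t : ℝ) : t * (1 - t) ≤ 1 / 4 := by
  nlinarith [sq_nonneg (t - 1 / 2)]

lemma three_mul_sq_sub_three_mul_add_one_pos (t : ℝ) : 0 < 3 * t ^ 2 - 3 * t + 1 := by
  nlinarith [mul_one_sub_le_quarter t]

theorem hasSum_geometric_three_mul_one_sub {t : ℝ} (ht : t ∈ Icc (0:ℝ) 1) :
    HasSum (fun n : ℕ => 3 * (1 - t) * (3 * (t * (1 - t))) ^ n)
      (3 * (1 - t) / (3 * t ^ 2 - 3 * t + 1)) := by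
  have h0 : 0 ≤ 3 * (t * (1 - t)) := by have := mul_nonneg ht.1 (sub_nonneg.2 ht.2); linarith
  have h1 : 3 * (t * (1 - t)) < 1 := by linarith [mul_one_sub_le_quarter t]
  have h := (hasSum_geometric_of_lt_one h0 h1).mul_left (3 * (1 - t))
  rwa [← div_eq_mul_inv, show 1 - 3 * (t * (1 - t)) = 3 * t ^ 2 - 3 * t + 1 by ring] at h

theorem hasDerivAt_log_add_arctan (t : ℝ) :
    HasDerivAt (fun t => -(1 / 2) * log (3 * t ^ 2 - 3 * t + 1) + √3 * arctan (√3 * (2 * t - 1)))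
      (3 * (1 - t) / (3 * t ^ 2 - 3 * t + 1)) t := by
  have hq := (three_mul_sq_sub_three_mul_add_one_pos t).ne'
  have h3 : √3 ^ 2 = 3 := sq_sqrt (by norm_num)
  have hlog : HasDerivAt (fun t => log (3 * t ^ 2 - 3 * t + 1))
      ((6 * t - 3) / (3 * t ^ 2 - 3 * t + 1)) t := by
    refine HasDerivAt.log ?_ hq
    refine ((((hasDerivAt_pow 2 t).const_mul 3).sub
      ((hasDerivAt_id t).const_mul 3)).add_const 1).congr_deriv ?_
    push_cast; ring
  have harctan : HasDerivAt (fun t => arctan (√3 * (2 * t - 1)))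
      (1 / (1 + (√3 * (2 * t - 1)) ^ 2) * (√3 * 2)) t := by
    refine (hasDerivAt_arctan _).comp t ?_
    exact ((((hasDerivAt_id t).const_mul 2).sub_const 1).const_mul √3).congr_deriv (by ring)
  refine ((hlog.const_mul (-(1 / 2))).add (harctan.const_mul √3)).congr_deriv ?_
  rw [mul_pow, h3, show 1 + 3 * (2 * t - 1) ^ 2 = 4 * (3 * t ^ 2 - 3 * t + 1) by ring]
  field_simp
  rw [h3]
  ring

theorem integral_three_mul_one_sub_div :
    ∫ t in (0:ℝ)..1, 3 * (1 - t) / (3 * t ^ 2 - 3 * t + 1) = 2 * π / √3 := by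
  have hq (t : ℝ) := (three_mul_sq_sub_three_mul_add_one_pos t).ne'
  rw [integral_eq_sub_of_hasDerivAt (fun t _ => hasDerivAt_log_add_arctan t)
    (by apply Continuous.intervalIntegrable; fun_prop (disch := exact hq _))]
  have harctan : arctan √3 = π / 3 := by
    rw [← tan_pi_div_three, arctan_tan] <;> linarith [pi_pos]
  norm_num [harctan]
  field_simp
  rw [sq_sqrt zero_le_three]
  norm_num

theorem three_pow_div_eq_integral (n : ℕ) :
    (3:ℝ) ^ (n + 1) / (((n : ℝ) + 1) * (2 * (n + 1)).choose (n + 1))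
      = ∫ t in (0:ℝ)..1, 3 * (1 - t) * (3 * (t * (1 - t))) ^ n := by
  rw [div_eq_mul_inv, inv_succ_mul_choose_eq_integral, ← integral_const_mul]
  refine integral_congr fun t _ => ?_
  rw [mul_pow, mul_pow]
  ring

lemma norm_three_mul_one_sub_le {t : ℝ} (ht : t ∈ Icc (0:ℝ) 1) (n : ℕ) :
    ‖3 * (1 - t) * (3 * (t * (1 - t))) ^ n‖ ≤ 3 * (3 / 4) ^ n := by
  obtain ⟨h0, h1⟩ := ht
  have h0' : 0 ≤ 1 - t := by linarith
  rw [Real.norm_of_nonneg (by positivity)]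
  gcongr
  · linarith
  · linarith [mul_one_sub_le_quarter t]

theorem hasSum_integral_three_mul_one_sub :
    HasSum (fun n : ℕ => ∫ t in (0:ℝ)..1, 3 * (1 - t) * (3 * (t * (1 - t))) ^ n)
      (∫ t in (0:ℝ)..1, 3 * (1 - t) / (3 * t ^ 2 - 3 * t + 1)) := by
  have hIcc : ∀ t ∈ uIoc (0:ℝ) 1, t ∈ Icc (0:ℝ) 1 := fun t ht =>
    Ioc_subset_Icc_self (by rwa [uIoc_of_le zero_le_one] at ht)
  have hsummable : Summable fun n : ℕ => 3 * (3 / 4 : ℝ) ^ n :=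
    (summable_geometric_of_lt_one (by norm_num) (by norm_num)).mul_left 3
  refine hasSum_integral_of_dominated_convergence (fun n _ => 3 * (3 / 4 : ℝ) ^ n)
    (fun n => by fun_prop)
    (fun n => Eventually.of_forall fun t ht => norm_three_mul_one_sub_le (hIcc t ht) n)
    (Eventually.of_forall fun _ _ => hsummable) intervalIntegrable_const
    (Eventually.of_forall fun t ht => hasSum_geometric_three_mul_one_sub (hIcc t ht))

theorem stmt_2 : (∑' i : ℕ, (3:ℝ)^(i+1) / (((i:ℝ)+1) * ((Nat.choose (2*(i+1)) (i+1)) : ℝ))) = 2 * Real.pi / Real.sqrt 3 := by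
  rw [tsum_congr three_pow_div_eq_integral, hasSum_integral_three_mul_one_sub.tsum_eq,
    integral_three_mul_one_sub_div]
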